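/- Let Q be a connected quiver, k a field, θ : V → ℝ generic with Σ_{i∈V} θ_i = 0, and (x, x*) a θ-stable toric representation of the double quiver of Q. Let e ∈ E and suppose the restriction of (x, x*) to E ∖ {e} is not θ-stable; call a subset J ⊆ V destabilising if ∅ ≠ J ⊊ V, J is closed for the restriction of (x, x*) to E ∖ {e}, and Σ_{i∈J} θ_i ≤ 0. Then: (i) a destabilising subset exists, and every destabilising subset contains exactly one of t(e), h(e); (ii) all destabilising subsets contain the same endpoint of e; (iii) if every destabilising subset contains t(e) then x_e ≠ 0, and if every destabilising subset contains h(e) then x*_e ≠ 0. -/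

import Mathlib

open Classical Finset

noncomputable section

/-- The equivalence relation on vertices generated by the edges in `D`:
`t e` and `h e` are related for every `e ∈ D`. -/
def joinedRel {V E : Type} (tl hd : E → V) (D : Set E) : V → V → Prop :=
  Relation.EqvGen fun a b => ∃ e ∈ D, (tl e = a ∧ hd e = b) ∨ (tl e = b ∧ hd e = a)

/-- The graph `(V, D)` is connected. -/
def IsConn {V E : Type} (tl hd : E → V) (D : Set E) : Prop :=
  ∀ a b : V, joinedRel tl hd D a b

/-- `T ⊆ E` is a spanning tree: `(V, T)` is connected and `#T = #V - 1`. -/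
def IsSpanningTree {V E : Type} [Fintype V] (tl hd : E → V) (T : Finset E) : Prop :=
  IsConn tl hd ↑T ∧ T.card + 1 = Fintype.card V

/-- The connected component of the vertex `v` in the graph with edge set `D`. -/
def component {V E : Type} [Fintype V] (tl hd : E → V) (D : Finset E) (v : V) : Finset V :=
  Finset.univ.filter fun j => joinedRel tl hd (↑D) v j

/-- Genericity of a stability parameter. -/
def Generic {V : Type} [Fintype V] (θ : V → ℝ) : Prop :=
  ∀ J : Finset V, J.Nonempty → J ≠ Finset.univ → ∑ i ∈ J, θ i ≠ 0

/-- Auxiliary recursion computing the external activity: `S` is the set of remaining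
edges and `C` the set of already contracted edges (an edge of the current, partially
contracted, quiver is a loop iff its endpoints are joined by edges of `C`).  At each
step the largest non-loop edge is contracted (if it lies in `T`) or deleted (otherwise);
once no non-loop edge remains (i.e. the contracted quiver has one vertex), the number of
remaining (loop) edges is returned. -/
def extactAux {V E : Type} [LinearOrder E] (tl hd : E → V) (T : Finset E)
    (S C : Finset E) : ℕ :=
  if hne : (S.filter fun e => ¬ joinedRel tl hd (↑C) (tl e) (hd e)).Nonempty then
    if (S.filter fun e => ¬ joinedRel tl hd (↑C) (tl e) (hd e)).max' hne ∈ T then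
      extactAux tl hd T
        (S.erase ((S.filter fun e => ¬ joinedRel tl hd (↑C) (tl e) (hd e)).max' hne))
        (insert ((S.filter fun e => ¬ joinedRel tl hd (↑C) (tl e) (hd e)).max' hne) C)
    else
      extactAux tl hd T
        (S.erase ((S.filter fun e => ¬ joinedRel tl hd (↑C) (tl e) (hd e)).max' hne)) C
  else S.card
termination_by S.card
decreasing_by
  · exact Finset.card_lt_card (Finset.erase_ssubset
      (Finset.mem_of_mem_filter _ (Finset.max'_mem _ hne)))
  · exact Finset.card_lt_card (Finset.erase_ssubset
      (Finset.mem_of_mem_filter _ (Finset.max'_mem _ hne)))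

/-- The external activity `extact(Q, T)` of a spanning tree `T`, with respect to a fixed
linear order on the edges. -/
def extact {V E : Type} [Fintype E] [LinearOrder E] (tl hd : E → V) (T : Finset E) : ℕ :=
  extactAux tl hd T Finset.univ ∅

/-- Isomorphism of toric representations. -/
def IsoRep {V E k : Type} [Field k] (tl hd : E → V) (x x' : E → k) : Prop :=
  ∃ g : V → kˣ, ∀ e, x' e = (g (hd e) : k) * x e * ((g (tl e) : k))⁻¹

/-- Gauge equivalence (the `(kˣ)^V`-action) for representations of the double quiver. -/
def GaugeEquiv {V E k : Type} [Field k] (tl hd : E → V) (x xs x' xs' : E → k) : Prop :=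
  ∃ g : V → kˣ,
    (∀ e, x' e = (g (hd e) : k) * x e * ((g (tl e) : k))⁻¹) ∧
    (∀ e, xs' e = (g (tl e) : k) * xs e * ((g (hd e) : k))⁻¹)

/-- The moment map equations for the parameter `lam`. -/
def MomentMap {V E k : Type} [Fintype E] [Field k] (tl hd : E → V) (lam : V → k)
    (x xs : E → k) : Prop :=
  ∀ i : V,
    (∑ e ∈ Finset.univ.filter fun e => hd e = i, x e * xs e) -
      (∑ e ∈ Finset.univ.filter fun e => tl e = i, x e * xs e) = lam i

/-- `J` is closed for `(x, xs)`, with only the conditions for edges in `S` imposed. -/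
def ClosedOn {V E k : Type} [Zero k] (tl hd : E → V) (x xs : E → k) (S : Set E)
    (J : Finset V) : Prop :=
  ∀ e ∈ S, (x e ≠ 0 → tl e ∈ J → hd e ∈ J) ∧ (xs e ≠ 0 → hd e ∈ J → tl e ∈ J)

/-- `θ`-stability of `(x, xs)` on the subquiver with vertex set `W` and edge set `S`. -/
def StableSub {V E k : Type} [Zero k] (tl hd : E → V) (θ : V → ℝ) (x xs : E → k)
    (W : Finset V) (S : Set E) : Prop :=
  ∀ J : Finset V, J ⊆ W → ClosedOn tl hd x xs S J → J.Nonempty → J ≠ W →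
    0 < ∑ i ∈ J, θ i

/-- Destabilising subsets for `(x, xs)` on the subquiver `(W, S)`. -/
def DestabSub {V E k : Type} [Zero k] (tl hd : E → V) (θ : V → ℝ) (x xs : E → k)
    (W : Finset V) (S : Set E) (J : Finset V) : Prop :=
  J ⊆ W ∧ J.Nonempty ∧ J ≠ W ∧ ClosedOn tl hd x xs S J ∧ ∑ i ∈ J, θ i ≤ 0

/-- The projection identifying the vertex `a` with the vertex `b`, i.e. the quotient map
`V → V/e` for the contraction of an edge with tail `a` and head `b` (the quotient being
modelled on the subtype of vertices different from `a`). -/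
def cProj {V : Type} (a b : V) (h : b ≠ a) (i : V) : {j : V // j ≠ a} :=
  if hi : i = a then ⟨b, h⟩ else ⟨i, hi⟩

/-- Tail map of the contracted quiver `Q/e`. -/
def contractTl {V E : Type} (tl hd : E → V) (e : E) (h : hd e ≠ tl e)
    (f : {f : E // f ≠ e}) : {j : V // j ≠ tl e} := cProj (tl e) (hd e) h (tl f.1)

/-- Head map of the contracted quiver `Q/e`. -/
def contractHd {V E : Type} (tl hd : E → V) (e : E) (h : hd e ≠ tl e)
    (f : {f : E // f ≠ e}) : {j : V // j ≠ tl e} := cProj (tl e) (hd e) h (hd f.1)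

/-- Contraction `θ/e` (or `λ/e`) of a parameter along the contraction of an edge with
tail `a` and head `b`: the new vertex `ι` (represented by `b`) gets the value
`θ a + θ b`, all other vertices keep their values. -/
def contractParam {V R : Type} [Add R] (a b : V) (θ : V → R) (j : {i : V // i ≠ a}) : R :=
  if (j : V) = b then θ a + θ b else θ (j : V)

/-- The graph of the tree-assignment recursion: `TreeAssign tl hd x xs W S θ T` means
that the recursion, applied to the restriction of `(x, xs)` to the subquiver with vertex
set `W` and edge set `S` and with stability parameter `θ` (and the linear order induced
from `E`), produces the spanning tree `T`. -/
inductive TreeAssign {V E k : Type} [Fintype V] [LinearOrder E] [Zero k]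
    (tl hd : E → V) (x xs : E → k) :
    Finset V → Finset E → (V → ℝ) → Finset E → Prop
  | base (W : Finset V) (S : Finset E) (θ : V → ℝ) (hW : W.card = 1) :
      TreeAssign tl hd x xs W S θ ∅
  | delete (W : Finset V) (S : Finset E) (θ : V → ℝ) (e : E)
      (he : e ∈ S) (hloop : tl e ≠ hd e)
      (hsmall : ∀ f ∈ S, tl f ≠ hd f → e ≤ f)
      (hstab : StableSub tl hd θ x xs W ↑(S.erase e))
      (T : Finset E) (ih : TreeAssign tl hd x xs W (S.erase e) θ T) :
      TreeAssign tl hd x xs W S θ T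
  | contract (W : Finset V) (S : Finset E) (θ : V → ℝ) (e : E) (a b : V)
      (he : e ∈ S) (hloop : tl e ≠ hd e)
      (hsmall : ∀ f ∈ S, tl f ≠ hd f → e ≤ f)
      (hab : (a = tl e ∧ b = hd e) ∨ (a = hd e ∧ b = tl e))
      (J₁ : Finset V)
      (hJ₁ : DestabSub tl hd θ x xs W ↑(S.erase e) J₁)
      (hall : ∀ J, DestabSub tl hd θ x xs W ↑(S.erase e) J → a ∈ J ∧ b ∉ J)
      (hmin : ∀ J, DestabSub tl hd θ x xs W ↑(S.erase e) J →
        ∑ i ∈ J₁, θ i ≤ ∑ i ∈ J, θ i)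
      (T₁ T₂ : Finset E)
      (ih₁ : TreeAssign tl hd x xs J₁ (S.filter fun f => tl f ∈ J₁ ∧ hd f ∈ J₁)
          (fun i => if i = a then θ i - ∑ j ∈ J₁, θ j
            else if i = b then θ i + ∑ j ∈ J₁, θ j else θ i) T₁)
      (ih₂ : TreeAssign tl hd x xs (W \ J₁)
          (S.filter fun f => tl f ∈ W \ J₁ ∧ hd f ∈ W \ J₁)
          (fun i => if i = a then θ i - ∑ j ∈ J₁, θ j
            else if i = b then θ i + ∑ j ∈ J₁, θ j else θ i) T₂) :
      TreeAssign tl hd x xs W S θ (insert e (T₁ ∪ T₂))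

/-- Points of the cell `M_T`: `θ`-stable pairs satisfying the moment map equations whose
assigned spanning tree is `T`. -/
def CellPt {V E k : Type} [Fintype V] [Fintype E] [LinearOrder E] [Field k]
    (tl hd : E → V) (lam : V → k) (θ : V → ℝ) (T : Finset E) : Type :=
  {p : (E → k) × (E → k) //
    StableSub tl hd θ p.1 p.2 Finset.univ Set.univ ∧
    MomentMap tl hd lam p.1 p.2 ∧
    TreeAssign tl hd p.1 p.2 Finset.univ Finset.univ θ T}

/-- The cell `M_T` of the Nakajima orbit set: `(kˣ)^V`-orbits of points. -/
def Cell {V E k : Type} [Fintype V] [Fintype E] [LinearOrder E] [Field k]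
    (tl hd : E → V) (lam : V → k) (θ : V → ℝ) (T : Finset E) : Type :=
  Quot fun p q : CellPt tl hd lam θ T => GaugeEquiv tl hd p.1.1 p.1.2 q.1.1 q.1.2

/-!
A destabilising subset `J` is closed for every edge except `e`; since the full representation
is stable, `J` must violate closedness at `e`, i.e. it contains one endpoint of `e`, not the
other, and the arrow of `e` leaving `J` is nonzero. If two destabilising subsets `J ∋ h(e)` and
`J' ∋ t(e)` were oriented oppositely, then `J ∩ J'` and `J ∪ J'` would be closed for all edges,
so both have `θ`-sum `≥ 0`; but `θ(J ∪ J') + θ(J ∩ J') = θ(J) + θ(J') < 0` by genericity.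
-/

section

variable {V E k : Type} [Zero k] {tl hd : E → V} {x xs : E → k}

theorem ClosedOn.inter {S : Set E} {J J' : Finset V} (h : ClosedOn tl hd x xs S J)
    (h' : ClosedOn tl hd x xs S J') : ClosedOn tl hd x xs S (J ∩ J') := by
  intro f hf
  obtain ⟨h₁, h₂⟩ := h f hf
  obtain ⟨h₁', h₂'⟩ := h' f hf
  simp only [mem_inter]
  exact ⟨fun hx ht => ⟨h₁ hx ht.1, h₁' hx ht.2⟩, fun hx ht => ⟨h₂ hx ht.1, h₂' hx ht.2⟩⟩

theorem ClosedOn.union {S : Set E} {J J' : Finset V} (h : ClosedOn tl hd x xs S J)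
    (h' : ClosedOn tl hd x xs S J') : ClosedOn tl hd x xs S (J ∪ J') := by
  intro f hf
  obtain ⟨h₁, h₂⟩ := h f hf
  obtain ⟨h₁', h₂'⟩ := h' f hf
  simp only [mem_union]
  exact ⟨fun hx => Or.imp (h₁ hx) (h₁' hx), fun hx => Or.imp (h₂ hx) (h₂' hx)⟩

theorem ClosedOn.univ_of_ne {e : E} {J : Finset V} (h : ClosedOn tl hd x xs {f | f ≠ e} J)
    (hx : x e ≠ 0 → tl e ∈ J → hd e ∈ J) (hxs : xs e ≠ 0 → hd e ∈ J → tl e ∈ J) :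
    ClosedOn tl hd x xs Set.univ J := by
  intro f _
  by_cases hf : f = e
  · subst hf
    exact ⟨hx, hxs⟩
  · exact h f hf

theorem exists_destabSub_of_not_stableSub {θ : V → ℝ} {W : Finset V} {S : Set E}
    (h : ¬ StableSub tl hd θ x xs W S) : ∃ J, DestabSub tl hd θ x xs W S J := by
  simp only [StableSub, not_forall, not_lt] at h
  obtain ⟨J, hsub, hcl, hne, hnW, hsum⟩ := h
  exact ⟨J, hsub, hne, hnW, hcl, hsum⟩

variable [Fintype V] {θ : V → ℝ}

theorem StableSub.sum_nonneg (hstab : StableSub tl hd θ x xs univ Set.univ)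
    (hθ : ∑ i, θ i = 0) {J : Finset V} (hJ : ClosedOn tl hd x xs Set.univ J) :
    0 ≤ ∑ i ∈ J, θ i := by
  rcases J.eq_empty_or_nonempty with rfl | hne
  · simp
  by_cases huniv : J = univ
  · rw [huniv, hθ]
  · exact (hstab J (subset_univ J) hJ hne huniv).le

theorem DestabSub.sum_neg (hgen : Generic θ) {S : Set E} {J : Finset V}
    (hJ : DestabSub tl hd θ x xs univ S J) : ∑ i ∈ J, θ i < 0 :=
  hJ.2.2.2.2.lt_of_ne (hgen J hJ.2.1 hJ.2.2.1)

variable {e : E}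

theorem DestabSub.separates (hstab : StableSub tl hd θ x xs univ Set.univ) {J : Finset V}
    (hJ : DestabSub tl hd θ x xs univ {f | f ≠ e} J) :
    (x e ≠ 0 ∧ tl e ∈ J ∧ hd e ∉ J) ∨ (xs e ≠ 0 ∧ hd e ∈ J ∧ tl e ∉ J) := by
  obtain ⟨hsub, hne, hnuniv, hcl, hsum⟩ := hJ
  by_contra! hc
  exact hsum.not_gt (hstab J hsub (hcl.univ_of_ne hc.1 hc.2) hne hnuniv)

theorem DestabSub.false_of_opposite (hstab : StableSub tl hd θ x xs univ Set.univ)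
    (hθ : ∑ i, θ i = 0) (hgen : Generic θ) {J J' : Finset V}
    (hJ : DestabSub tl hd θ x xs univ {f | f ≠ e} J)
    (hJ' : DestabSub tl hd θ x xs univ {f | f ≠ e} J')
    (hhd : hd e ∈ J) (htl : tl e ∉ J) (htl' : tl e ∈ J') (hhd' : hd e ∉ J') : False := by
  have hinter : 0 ≤ ∑ i ∈ J ∩ J', θ i := hstab.sum_nonneg hθ <|
    (hJ.2.2.2.1.inter hJ'.2.2.2.1).univ_of_ne
      (fun _ ht => absurd (mem_inter.1 ht).1 htl) (fun _ ht => absurd (mem_inter.1 ht).2 hhd')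
  have hunion : 0 ≤ ∑ i ∈ J ∪ J', θ i := hstab.sum_nonneg hθ <|
    (hJ.2.2.2.1.union hJ'.2.2.2.1).univ_of_ne
      (fun _ _ => mem_union_left _ hhd) (fun _ _ => mem_union_right _ htl')
  have hmodular : ∑ i ∈ J ∪ J', θ i + ∑ i ∈ J ∩ J', θ i = ∑ i ∈ J, θ i + ∑ i ∈ J', θ i :=
    sum_union_inter
  linarith [hJ.sum_neg hgen, hJ'.sum_neg hgen]

end

theorem statement11_general {V E : Type} [Fintype V]
    (tl hd : E → V)
    (k : Type) [Field k]
    (θ : V → ℝ) (hgen : Generic θ) (hθ : ∑ i, θ i = 0)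
    (x xs : E → k)
    (hstab : StableSub tl hd θ x xs Finset.univ Set.univ)
    (e : E)
    (hunst : ¬ StableSub tl hd θ x xs Finset.univ {f | f ≠ e}) :
    (∃ J, DestabSub tl hd θ x xs Finset.univ {f | f ≠ e} J) ∧
    (∀ J, DestabSub tl hd θ x xs Finset.univ {f | f ≠ e} J →
      (tl e ∈ J ∧ hd e ∉ J) ∨ (tl e ∉ J ∧ hd e ∈ J)) ∧
    ((∀ J, DestabSub tl hd θ x xs Finset.univ {f | f ≠ e} J → tl e ∈ J) ∨
      (∀ J, DestabSub tl hd θ x xs Finset.univ {f | f ≠ e} J → hd e ∈ J)) ∧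
    ((∀ J, DestabSub tl hd θ x xs Finset.univ {f | f ≠ e} J → tl e ∈ J) → x e ≠ 0) ∧
    ((∀ J, DestabSub tl hd θ x xs Finset.univ {f | f ≠ e} J → hd e ∈ J) → xs e ≠ 0) := by
  obtain ⟨J₀, hJ₀⟩ := exists_destabSub_of_not_stableSub hunst
  have hsep := fun J (hJ : DestabSub tl hd θ x xs univ {f | f ≠ e} J) => hJ.separates hstab
  refine ⟨⟨J₀, hJ₀⟩, fun J hJ => (hsep J hJ).imp (fun h => ⟨h.2.1, h.2.2⟩) (fun h => ⟨h.2.2, h.2.1⟩),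
    ?_, fun hall => ?_, fun hall => ?_⟩
  · by_contra! ⟨⟨J, hJ, htl⟩, ⟨J', hJ', hhd'⟩⟩
    have hhd := ((hsep J hJ).resolve_left fun h => htl h.2.1).2.1
    have htl' := ((hsep J' hJ').resolve_right fun h => hhd' h.2.1).2.1
    exact hJ.false_of_opposite hstab hθ hgen hJ' hhd htl htl' hhd'
  · exact (hsep J₀ hJ₀).elim And.left fun h => absurd (hall J₀ hJ₀) h.2.2
  · exact (hsep J₀ hJ₀).elim (fun h => absurd (hall J₀ hJ₀) h.2.2) And.left

/-- if `(x, xs)` is `θ`-stable but its restriction to `E ∖ {e}` is not,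
then destabilising subsets exist, each contains exactly one endpoint of `e`, they all
contain the same endpoint, and the corresponding linear map on `e` is nonzero. -/
theorem statement11 {V E : Type} [Fintype V] [Nonempty V] [Fintype E]
    (tl hd : E → V) (hQ : IsConn tl hd Set.univ)
    (k : Type) [Field k]
    (θ : V → ℝ) (hgen : Generic θ) (hθ : ∑ i, θ i = 0)
    (x xs : E → k)
    (hstab : StableSub tl hd θ x xs Finset.univ Set.univ)
    (e : E)
    (hunst : ¬ StableSub tl hd θ x xs Finset.univ {f | f ≠ e}) :
    (∃ J, DestabSub tl hd θ x xs Finset.univ {f | f ≠ e} J) ∧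
    (∀ J, DestabSub tl hd θ x xs Finset.univ {f | f ≠ e} J →
      (tl e ∈ J ∧ hd e ∉ J) ∨ (tl e ∉ J ∧ hd e ∈ J)) ∧
    ((∀ J, DestabSub tl hd θ x xs Finset.univ {f | f ≠ e} J → tl e ∈ J) ∨
      (∀ J, DestabSub tl hd θ x xs Finset.univ {f | f ≠ e} J → hd e ∈ J)) ∧
    ((∀ J, DestabSub tl hd θ x xs Finset.univ {f | f ≠ e} J → tl e ∈ J) → x e ≠ 0) ∧
    ((∀ J, DestabSub tl hd θ x xs Finset.univ {f | f ≠ e} J → hd e ∈ J) → xs e ≠ 0) :=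
  statement11_general tl hd k θ hgen hθ x xs hstab e hunst

end
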